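/- For any finite simple graph G of order n, the number of vertices of type Z satisfies |V_Z^G| ≤ ⌊n/2⌋. -/

import Mathlib

open Classical Real Matrix

noncomputable section

variable {V : Type} [Fintype V] [DecidableEq V]

/-- The number of edges of `G` with both endpoints in `A`. -/
def edgeCount (G : SimpleGraph V) (A : Finset V) : ℕ :=
  (Finset.univ.filter (fun p : V × V => G.Adj p.1 p.2 ∧ p.1 ∈ A ∧ p.2 ∈ A)).card / 2

/-- The graph state `|G⟩`, as a vector in `ℂ^(V → {0,1})`. -/
def graphState (G : SimpleGraph V) : (V → Bool) → ℂ :=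
  fun x => (-1 : ℂ) ^ edgeCount G (Finset.univ.filter (fun v => x v = true)) /
    (Real.sqrt (2 ^ Fintype.card V) : ℂ)

/-- The odd neighbourhood `Odd_G(D)` of a set `D` of vertices. -/
def oddNbhd (G : SimpleGraph V) (D : Finset V) : Finset V :=
  Finset.univ.filter (fun v => Odd ((D.filter (fun u => G.Adj v u)).card))

/-- The operator `X_A` flipping the coordinates in `A`. -/
def Xop (A : Finset V) (ψ : (V → Bool) → ℂ) : (V → Bool) → ℂ :=
  fun x => ψ (fun v => if v ∈ A then !(x v) else x v)

/-- The operator `Z_A`. -/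
def Zop (A : Finset V) (ψ : (V → Bool) → ℂ) : (V → Bool) → ℂ :=
  fun x => (-1 : ℂ) ^ ((A.filter (fun v => x v = true)).card) * ψ x

/-- The Pauli operator `𝒫_D^G = (−1)^{|G[D]|} X_D Z_{Odd_G(D)}`. -/
def pauliP (G : SimpleGraph V) (D : Finset V) (ψ : (V → Bool) → ℂ) : (V → Bool) → ℂ :=
  fun x => (-1 : ℂ) ^ edgeCount G D * Xop D (Zop (oddNbhd G D) ψ) x

/-- Index of a Bool in `Fin 2`. -/
def boolIdx (b : Bool) : Fin 2 := if b then 1 else 0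

/-- Action of a local (tensor-product) operator `⊗_u U_u` on the state space. -/
def applyLocal (U : V → Matrix (Fin 2) (Fin 2) ℂ) (ψ : (V → Bool) → ℂ) : (V → Bool) → ℂ :=
  fun x => ∑ y : V → Bool, (∏ u, U u (boolIdx (x u)) (boolIdx (y u))) * ψ y

/-- A local unitary: each single-qubit factor is unitary. -/
def IsLocalUnitary (U : V → Matrix (Fin 2) (Fin 2) ℂ) : Prop :=
  ∀ u, U u ∈ Matrix.unitaryGroup (Fin 2) ℂ

def Xgate : Matrix (Fin 2) (Fin 2) ℂ := !![0, 1; 1, 0]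

def Zgate : Matrix (Fin 2) (Fin 2) ℂ := !![1, 0; 0, -1]

def Ygate : Matrix (Fin 2) (Fin 2) ℂ := Complex.I • (Xgate * Zgate)

def Hgate : Matrix (Fin 2) (Fin 2) ℂ := (1 / (Real.sqrt 2 : ℂ)) • !![1, 1; 1, -1]

/-- The rotation `Z(α) = diag(1, e^{iα})`. -/
def Zrot (α : ℝ) : Matrix (Fin 2) (Fin 2) ℂ := !![1, 0; 0, Complex.exp (Complex.I * (α : ℂ))]

/-- The rotation `X(α) = H Z(α) H`. -/
def Xrot (α : ℝ) : Matrix (Fin 2) (Fin 2) ℂ := Hgate * Zrot α * Hgate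

/-- A 2×2 matrix is in the Pauli group. -/
def IsPauliGate (M : Matrix (Fin 2) (Fin 2) ℂ) : Prop :=
  ∃ z ∈ ({1, -1, Complex.I, -Complex.I} : Set ℂ),
    ∃ P ∈ ({1, Xgate, Ygate, Zgate} : Set (Matrix (Fin 2) (Fin 2) ℂ)), M = z • P

/-- A 2×2 unitary is Clifford if it maps `X` and `Z` to the Pauli group under conjugation. -/
def IsCliffordGate (C : Matrix (Fin 2) (Fin 2) ℂ) : Prop :=
  C ∈ Matrix.unitaryGroup (Fin 2) ℂ ∧ IsPauliGate (C * Xgate * Cᴴ) ∧ IsPauliGate (C * Zgate * Cᴴ)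

/-- The subgroup `LC_r` of 2×2 unitaries generated by `H` and `Z(π/2^r)`. -/
inductive InLCr (r : ℕ) : Matrix (Fin 2) (Fin 2) ℂ → Prop
  | H : InLCr r Hgate
  | Z : InLCr r (Zrot (π / 2 ^ r))
  | one : InLCr r 1
  | mul {A B : Matrix (Fin 2) (Fin 2) ℂ} : InLCr r A → InLCr r B → InLCr r (A * B)
  | inv {A : Matrix (Fin 2) (Fin 2) ℂ} : InLCr r A → InLCr r A⁻¹

/-- Two states are LU-equivalent when some local unitary maps one to the other. -/
def LUequiv (ψ φ : (V → Bool) → ℂ) : Prop :=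
  ∃ U : V → Matrix (Fin 2) (Fin 2) ℂ, IsLocalUnitary U ∧ φ = applyLocal U ψ

/-- Two states are `LC_r`-equivalent when some local unitary with all factors in `LC_r`
maps one to the other. -/
def LCrEquiv (r : ℕ) (ψ φ : (V → Bool) → ℂ) : Prop :=
  ∃ U : V → Matrix (Fin 2) (Fin 2) ℂ, (∀ u, InLCr r (U u)) ∧ φ = applyLocal U ψ

/-- Local complementation of `G` at a vertex `u`: `v ∼ w` iff `(v ∼_G w) XOR (v, w ∈ N_G(u))`. -/
def localComp (G : SimpleGraph V) (u : V) : SimpleGraph V where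
  Adj v w := v ≠ w ∧ ¬ (G.Adj v w ↔ G.Adj u v ∧ G.Adj u w)
  symm := by
    refine ⟨fun v w h => ?_⟩
    obtain ⟨h1, h2⟩ := h
    refine ⟨h1.symm, fun h => h2 ?_⟩
    rw [G.adj_comm w v] at h
    tauto
  loopless := ⟨fun v h => h.1 rfl⟩

/-- Local equivalence: related by a sequence of local complementations. -/
def LocalEquiv : SimpleGraph V → SimpleGraph V → Prop :=
  Relation.ReflTransGen (fun G G' => ∃ u, G' = localComp G u)

/-- The local Clifford operator `L_u^G = X_u(π/2) ⊗_{v ∈ N_G(u)} Z_v(−π/2)`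
implementing the local complementation at `u`. -/
def Lmat (G : SimpleGraph V) (u : V) : V → Matrix (Fin 2) (Fin 2) ℂ :=
  fun v => if v = u then Xrot (π / 2) else if G.Adj u v then Zrot (-(π / 2)) else 1

/-- The local Clifford operator implementing a sequence of local complementations:
`lcSeqOp G [a₁, …, a_m] = L_{a_m}^{G^{(m−1)}} ⋯ L_{a_1}^{G^{(0)}}` (pointwise products). -/
def lcSeqOp : SimpleGraph V → List V → V → Matrix (Fin 2) (Fin 2) ℂ
  | _, [] => fun _ => 1
  | G, a :: l => fun v => lcSeqOp (localComp G a) l v * Lmat G a v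

/-- The support of a multiset of vertices. -/
def msSupp (S : V → ℕ) : Finset V := Finset.univ.filter (fun u => 0 < S u)

/-- A multiset of vertices is independent in `G` when its support is an independent set. -/
def MsIndep (G : SimpleGraph V) (S : V → ℕ) : Prop :=
  ∀ u v, 0 < S u → 0 < S v → ¬ G.Adj u v

/-- `S • A = Σ_{u ∈ A} S(u)`. -/
def msDot (S : V → ℕ) (A : Finset V) : ℕ := ∑ u ∈ A, S u

/-- The common neighbourhood `Λ_G^K = ⋂_{u ∈ K} N_G(u)`. -/
def commonNbhd (G : SimpleGraph V) (K : Finset V) : Finset V :=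
  Finset.univ.filter (fun v => ∀ u ∈ K, G.Adj u v)

/-- The Kronecker delta `δ(0) = 1`, `δ(k) = 0` for `k > 0`. -/
def kdelta (k : ℕ) : ℕ := if k = 0 then 1 else 0

/-- `S` is `r`-incident in `G`. -/
def RIncident (G : SimpleGraph V) (r : ℕ) (S : V → ℕ) : Prop :=
  ∀ k < r, ∀ K : Finset V, (∀ u ∈ K, u ∉ msSupp S) → K.card = k + 2 →
    2 ^ (r - k - kdelta k) ∣ msDot S (commonNbhd G K)

/-- The `r`-local complementation `G ⋆^r S`. -/
def rLocalComp (G : SimpleGraph V) (r : ℕ) (S : V → ℕ) : SimpleGraph V where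
  Adj u v := u ≠ v ∧
    ¬ (G.Adj u v ↔ msDot S (commonNbhd G {u, v}) ≡ 2 ^ (r - 1) [MOD 2 ^ r])
  symm := by
    refine ⟨fun u v h => ?_⟩
    obtain ⟨h1, h2⟩ := h
    refine ⟨h1.symm, fun h => h2 ?_⟩
    rw [G.adj_comm v u, Finset.pair_comm v u] at h
    exact h
  loopless := ⟨fun u h => h.1 rfl⟩

/-- `G ⋆^r S` is valid when `S` is independent and `r`-incident. -/
def ValidRLC (G : SimpleGraph V) (r : ℕ) (S : V → ℕ) : Prop :=
  MsIndep G S ∧ RIncident G r S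

/-- `r`-local equivalence: related by a sequence of valid `r`-local complementations. -/
def RLocalEquiv (r : ℕ) : SimpleGraph V → SimpleGraph V → Prop :=
  Relation.ReflTransGen (fun G G' => ∃ S : V → ℕ, ValidRLC G r S ∧ G' = rLocalComp G r S)

/-- A local set of `G`: a nonempty set of the form `D ∪ Odd_G(D)`. -/
def IsLocalSet (G : SimpleGraph V) (L : Finset V) : Prop :=
  L.Nonempty ∧ ∃ D : Finset V, L = D ∪ oddNbhd G D

/-- A minimal local set of `G`. -/
def IsMLS (G : SimpleGraph V) (L : Finset V) : Prop :=
  IsLocalSet G L ∧ ∀ L' : Finset V, IsLocalSet G L' → L' ⊆ L → L' = L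

/-- A vertex has type X in `G`. -/
def HasTypeX (G : SimpleGraph V) (u : V) : Prop :=
  (∃ L, IsMLS G L ∧ u ∈ L) ∧
  ∀ L D : Finset V, IsMLS G L → u ∈ L → L = D ∪ oddNbhd G D → u ∈ D ∧ u ∉ oddNbhd G D

/-- A vertex has type Y in `G`. -/
def HasTypeY (G : SimpleGraph V) (u : V) : Prop :=
  (∃ L, IsMLS G L ∧ u ∈ L) ∧
  ∀ L D : Finset V, IsMLS G L → u ∈ L → L = D ∪ oddNbhd G D → u ∈ D ∧ u ∈ oddNbhd G D

/-- A vertex has type Z in `G`. -/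
def HasTypeZ (G : SimpleGraph V) (u : V) : Prop :=
  (∃ L, IsMLS G L ∧ u ∈ L) ∧
  ∀ L D : Finset V, IsMLS G L → u ∈ L → L = D ∪ oddNbhd G D → u ∉ D ∧ u ∈ oddNbhd G D

/-- A vertex has type ⊥ in `G`. -/
def HasTypeBot (G : SimpleGraph V) (u : V) : Prop :=
  ¬ HasTypeX G u ∧ ¬ HasTypeY G u ∧ ¬ HasTypeZ G u

/-- A graph on a linearly ordered vertex set is in standard form. -/
def StandardForm {W : Type} [Fintype W] [LinearOrder W] (G : SimpleGraph W) : Prop :=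
  (∀ u, ¬ HasTypeY G u) ∧
  ∀ u, HasTypeX G u → ∀ v, G.Adj u v → HasTypeZ G v ∧ u < v

/-- The `k`-subsets of `[1, t]`. -/
abbrev KSubsets (t k : ℕ) := {A : Finset (Fin t) // A.card = k}

/-- The vertex set of the graphs `C_{t,k}` and `C'_{t,k}`. -/
abbrev CtkVertex (t k : ℕ) := Fin t ⊕ KSubsets t k

/-- The bipartite graph `C_{t,k}`: `u ∈ [1,t]` is adjacent to a `k`-subset `A` iff `u ∈ A`. -/
def Ctk (t k : ℕ) : SimpleGraph (CtkVertex t k) :=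
  SimpleGraph.fromRel (fun x y =>
    ∃ (u : Fin t) (A : KSubsets t k), x = Sum.inl u ∧ y = Sum.inr A ∧ u ∈ A.1)

/-- The graph `C'_{t,k}`: `C_{t,k}` together with all edges between distinct elements of `[1,t]`. -/
def Ctk' (t k : ℕ) : SimpleGraph (CtkVertex t k) :=
  SimpleGraph.fromRel (fun x y =>
    (∃ (u : Fin t) (A : KSubsets t k), x = Sum.inl u ∧ y = Sum.inr A ∧ u ∈ A.1) ∨
    (∃ u v : Fin t, x = Sum.inl u ∧ y = Sum.inl v))

end

/-! The type-Z vertices form a set `S` containing no local set: a minimal local set inside `S`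
has a nonempty generator, and a vertex of a generator is not of type Z. Since `Odd_G` is additive
for symmetric difference, `T ↦ Odd_G(T) \ S` is then injective on subsets of `S` (two subsets with
the same image differ by a `T` with `T ∪ Odd_G(T) ⊆ S`), so `2 ^ |S| ≤ 2 ^ (n - |S|)`. -/

open Finset
open scoped symmDiff

lemma Finset.odd_card_symmDiff_iff {α : Type*} [DecidableEq α] (s t : Finset α) :
    Odd #(s ∆ t) ↔ ¬(Odd #s ↔ Odd #t) := by
  have hunion := card_union_add_card_inter s t
  have hsdiff := card_sdiff_of_subset (inter_subset_union (s := s) (t := t))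
  rw [symmDiff_eq_sup_sdiff_inf, sup_eq_union, inf_eq_inter, hsdiff]
  simp only [Nat.odd_iff]
  have := card_le_card (inter_subset_union (s := s) (t := t))
  omega

section LocalSets

variable {V : Type} [Fintype V] [DecidableEq V] (G : SimpleGraph V)

omit [DecidableEq V] in
@[simp]
lemma oddNbhd_empty : oddNbhd G ∅ = ∅ := by
  simp [oddNbhd]

lemma oddNbhd_symmDiff (A B : Finset V) :
    oddNbhd G (A ∆ B) = oddNbhd G A ∆ oddNbhd G B := by
  ext v
  have hfilter : (A ∆ B).filter (G.Adj v) = A.filter (G.Adj v) ∆ B.filter (G.Adj v) := by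
    ext u
    simp only [mem_symmDiff, mem_filter]
    tauto
  simp only [oddNbhd, mem_symmDiff, mem_filter, mem_univ, true_and, hfilter,
    odd_card_symmDiff_iff]
  tauto

variable {G}

lemma IsLocalSet.exists_isMLS_subset {L : Finset V} (hL : IsLocalSet G L) :
    ∃ L', IsMLS G L' ∧ L' ⊆ L := by
  obtain ⟨L', hL'L, hmin⟩ := exists_minimal_le_of_wellFoundedLT (IsLocalSet G) L hL
  exact ⟨L', ⟨hmin.prop, fun L'' hL'' hsub => hmin.eq_of_le hL'' hsub⟩, hL'L⟩

lemma IsLocalSet.exists_not_hasTypeZ {L : Finset V} (hL : IsLocalSet G L) :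
    ∃ u ∈ L, ¬ HasTypeZ G u := by
  obtain ⟨L', hmls, hL'L⟩ := hL.exists_isMLS_subset
  obtain ⟨D, rfl⟩ := hmls.1.2
  obtain ⟨w, hw⟩ : D.Nonempty := by
    rw [nonempty_iff_ne_empty]
    rintro rfl
    simpa using hmls.1.1
  exact ⟨w, hL'L (mem_union_left _ hw), fun hZ => (hZ.2 _ D hmls (mem_union_left _ hw) rfl).1 hw⟩

lemma card_le_half_of_not_isLocalSet_subset {S : Finset V}
    (hS : ∀ L, IsLocalSet G L → ¬ L ⊆ S) : #S ≤ Fintype.card V / 2 := by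
  have hinj : Set.InjOn (fun T => oddNbhd G T \ S) S.powerset := by
    intro T hT T' hT' hTT'
    simp only [coe_powerset, Set.mem_preimage, Set.mem_powerset_iff, coe_subset] at hT hT'
    by_contra hne
    refine hS _ ⟨(symmDiff_nonempty.mpr hne).mono subset_union_left, _, rfl⟩ ?_
    refine union_subset (symmDiff_le_sup.trans (union_subset hT hT')) ?_
    intro u hu
    by_contra huS
    have hiff : u ∈ oddNbhd G T ↔ u ∈ oddNbhd G T' := by
      simpa [huS] using congrArg (u ∈ ·) hTT'
    rw [oddNbhd_symmDiff, mem_symmDiff] at hu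
    tauto
  have hpow : 2 ^ #S ≤ 2 ^ #Sᶜ := by
    simpa using card_le_card_of_injOn _
      (fun T _ => mem_powerset.mpr (sdiff_eq_inter_compl _ S ▸ inter_subset_right)) hinj
  have := (Nat.pow_le_pow_iff_right (by norm_num)).mp hpow
  rw [card_compl] at this
  omega

end LocalSets

theorem stmt_8 {V : Type} [Fintype V] [DecidableEq V] (G : SimpleGraph V) :
    {u : V | HasTypeZ G u}.ncard ≤ Fintype.card V / 2 := by
  have hS : ∀ L, IsLocalSet G L → ¬ L ⊆ univ.filter (HasTypeZ G) := fun L hL hsub => by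
    obtain ⟨u, hu, hnZ⟩ := hL.exists_not_hasTypeZ
    exact hnZ (mem_filter.mp (hsub hu)).2
  simpa [← Set.ncard_coe_finset] using card_le_half_of_not_isLocalSet_subset hS
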